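/- arXiv:2012.13837 — 3 statements merged into one kernel-verified Lean document; each statement's English description precedes it below -/
import Mathlib

section
/- Let F be a Borel probability measure on ℝ^d with density f with respect to Lebesgue measure, and let w : ℝ^d → (0, ∞) be a measurable weight function. Let γ > 0 and suppose the set Q_J = {x : f(x) > γ·w(x)} satisfies F(Q_J) = α with 0 < α < 1 and ∫_{Q_J} w(x) dx < ∞. Then Q_J minimizes the weighted measure among all sets of coverage at least α: every Borel set Q with F(Q) ≥ α satisfies ∫_Q w(x) dx ≥ ∫_{Q_J} w(x) dx. -/
open MeasureTheory Set
open scoped ENNReal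

/-!
A Neyman–Pearson argument. Let `ν` be the measure with density `w` and `c = γ`. On the
superlevel set `S = {c w < f}` we have `c ν ≤ F`, off it `F ≤ c ν`. If `F S ≤ F Q`, then
`c ν (S \ Q) ≤ F (S \ Q) ≤ F (Q \ S) ≤ c ν (Q \ S)`; cancelling `c` and adding `ν (S ∩ Q)`
to both sides gives `ν S ≤ ν Q`.
-/

namespace MeasureTheory

variable {α : Type*} [MeasurableSpace α] {μ ν : Measure α} {s t : Set α}

theorem measure_sdiff_le_measure_sdiff_of_le (hs : MeasurableSet s) (ht : MeasurableSet t)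
    (hμs : μ s ≠ ∞) (h : μ s ≤ μ t) : μ (s \ t) ≤ μ (t \ s) := by
  have hfin : μ (s ∩ t) ≠ ∞ := measure_ne_top_of_subset inter_subset_left hμs
  rwa [← ENNReal.add_le_add_iff_left hfin, measure_inter_add_sdiff _ ht, inter_comm,
    measure_inter_add_sdiff _ hs]

theorem measure_le_measure_of_measure_sdiff_le (hs : MeasurableSet s) (ht : MeasurableSet t)
    (h : μ (s \ t) ≤ μ (t \ s)) : μ s ≤ μ t :=
  calc μ s = μ (s ∩ t) + μ (s \ t) := (measure_inter_add_sdiff s ht).symm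
    _ ≤ μ (t ∩ s) + μ (t \ s) := by rw [inter_comm]; gcongr
    _ = μ t := measure_inter_add_sdiff t hs

theorem measure_le_measure_of_const_mul_le_on_of_le_const_mul_off {c : ℝ≥0∞} (hc₀ : c ≠ 0)
    (hc : c ≠ ∞) (hs : MeasurableSet s) (ht : MeasurableSet t)
    (h_on : c * ν (s \ t) ≤ μ (s \ t)) (h_off : μ (t \ s) ≤ c * ν (t \ s))
    (hμs : μ s ≠ ∞) (hμ : μ s ≤ μ t) : ν s ≤ ν t := by
  refine measure_le_measure_of_measure_sdiff_le hs ht ?_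
  rw [← ENNReal.mul_le_mul_iff_right hc₀ hc]
  exact h_on.trans ((measure_sdiff_le_measure_sdiff_of_le hs ht hμs hμ).trans h_off)

variable {g h : α → ℝ≥0∞} {c : ℝ≥0∞}

theorem const_mul_withDensity_apply_le (hs : MeasurableSet s) (hgh : ∀ x ∈ s, c * h x ≤ g x) :
    c * μ.withDensity h s ≤ μ.withDensity g s := by
  rw [withDensity_apply _ hs, withDensity_apply _ hs]
  exact (lintegral_const_mul_le c h).trans (setLIntegral_mono' hs hgh)

theorem withDensity_apply_le_const_mul (hc : c ≠ ∞) (hs : MeasurableSet s)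
    (hgh : ∀ x ∈ s, g x ≤ c * h x) : μ.withDensity g s ≤ c * μ.withDensity h s := by
  rw [withDensity_apply _ hs, withDensity_apply _ hs, ← lintegral_const_mul' c h hc]
  exact setLIntegral_mono' hs hgh

end MeasureTheory

theorem jhpd_minimal_weighted_measure_general {d : ℕ}
    (F : Measure (Fin d → ℝ))
    (f : (Fin d → ℝ) → ℝ) (hf : Measurable f)
    (hF : F = volume.withDensity (fun x => ENNReal.ofReal (f x)))
    (w : (Fin d → ℝ) → ℝ) (hw : Measurable w)
    (γ : ℝ) (hγ : 0 < γ)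
    (α : ℝ)
    (hQJ : F {x | γ * w x < f x} = ENNReal.ofReal α) :
    ∀ Q : Set (Fin d → ℝ), MeasurableSet Q → ENNReal.ofReal α ≤ F Q →
      ∫⁻ x in {x | γ * w x < f x}, ENNReal.ofReal (w x) ≤ ∫⁻ x in Q, ENNReal.ofReal (w x) := by
  intro Q hQ hFQ
  have hS : MeasurableSet {x | γ * w x < f x} := measurableSet_lt (hw.const_mul γ) hf
  rw [← withDensity_apply _ hS, ← withDensity_apply _ hQ]
  refine measure_le_measure_of_const_mul_le_on_of_le_const_mul_off (μ := F)
    (ENNReal.ofReal_pos.2 hγ).ne' ENNReal.ofReal_ne_top hS hQ ?_ ?_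
    (hQJ ▸ ENNReal.ofReal_ne_top) (hQJ ▸ hFQ) <;> rw [hF]
  · exact const_mul_withDensity_apply_le (hS.diff hQ) fun x hx =>
      (ENNReal.ofReal_mul hγ.le).symm.trans_le (ENNReal.ofReal_le_ofReal hx.1.le)
  · exact withDensity_apply_le_const_mul ENNReal.ofReal_ne_top (hQ.diff hS) fun x hx =>
      (ENNReal.ofReal_le_ofReal (not_lt.1 hx.2)).trans_eq (ENNReal.ofReal_mul hγ.le)

/-- Let `F` be a Borel probability measure on `ℝ^d` with density `f`, and let
`w : ℝ^d → (0,∞)` be a measurable weight function.  Let `γ > 0` and suppose that the set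
`QJ = {x | f x > γ * w x}` satisfies `F QJ = α` with `0 < α < 1` and `∫_{QJ} w < ∞`.  Then
`QJ` minimises the weighted measure among all Borel sets of coverage at least `α`:
every Borel `Q` with `F Q ≥ α` satisfies `∫_Q w ≥ ∫_{QJ} w`. -/
theorem jhpd_minimal_weighted_measure {d : ℕ}
    (F : Measure (Fin d → ℝ)) [IsProbabilityMeasure F]
    (f : (Fin d → ℝ) → ℝ) (hf : Measurable f)
    (hF : F = volume.withDensity (fun x => ENNReal.ofReal (f x)))
    (w : (Fin d → ℝ) → ℝ) (hw : Measurable w) (hwpos : ∀ x, 0 < w x)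
    (γ : ℝ) (hγ : 0 < γ)
    (α : ℝ) (hα0 : 0 < α) (hα1 : α < 1)
    (hQJ : F {x | γ * w x < f x} = ENNReal.ofReal α)
    (hfin : ∫⁻ x in {x | γ * w x < f x}, ENNReal.ofReal (w x) < ⊤) :
    ∀ Q : Set (Fin d → ℝ), MeasurableSet Q → ENNReal.ofReal α ≤ F Q →
      ∫⁻ x in {x | γ * w x < f x}, ENNReal.ofReal (w x) ≤ ∫⁻ x in Q, ENNReal.ofReal (w x) :=
  jhpd_minimal_weighted_measure_general F f hf hF w hw γ hγ α hQJ
end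

section
/- Let q : ℝ^d → [0,∞) be Borel measurable with 0 < c_q = ∫ q(x) dx < ∞, and let F be the probability measure with Lebesgue density f = q/c_q. Let 0 < α < 1 and γ > 0 with F({x : q(x) > γ}) = α, and set Q^α = {x : q(x) > γ}. Let X_1, X_2, … be i.i.d. with law F such that the CDF G of q(X_1) is continuous and strictly increasing on a neighborhood of γ (so G(γ) = 1 − α), and for n with ⌊(1−α)n⌋ ≥ 1 let γ̂_n be the ⌊(1−α)n⌋-th order statistic of q(X_1), …, q(X_n). Let μ be a Borel probability measure on ℝ^d with Lebesgue density, satisfying μ({x : q(x) = γ}) = 0, and let Z_1, Z_2, … be i.i.d. with law μ, independent of (X_j). Fix a Borel set Q and define FP_{m,n} = (1/m) Σ_{j=1}^m 1(q(Z_j) < γ̂_n)·1(Z_j ∈ Q) and FN_{m,n} = (1/m) Σ_{j=1}^m 1(q(Z_j) ≥ γ̂_n)·1(Z_j ∉ Q). Then FP_{m,n} + FN_{m,n} → μ(Q \ Q^α) + μ(Q^α \ Q) = μ(Q Δ Q^α) in probability as min(m,n) → ∞. -/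
open MeasureTheory Set Filter
open scoped ENNReal Topology symmDiff Classical

/-- The `k`-th order statistic (the `k`-th smallest value, `1 ≤ k ≤ n`) of the values
`Y 0 ω, …, Y (n-1) ω`: the least `t` such that at least `k` of the first `n` values are `≤ t`. -/
noncomputable def orderStat {Ω : Type*} (Y : ℕ → Ω → ℝ) (n k : ℕ) (ω : Ω) : ℝ :=
  sInf {t : ℝ | k ≤ ((Finset.range n).filter (fun j => Y j ω ≤ t)).card}

/-!
By the law of large numbers, the empirical CDF of the `q (X j)` at `γ - δ` and `γ + δ` converges
to `G (γ - δ) < 1 - α < G (γ + δ)`, so the `⌊(1 - α) n⌋`-th order statistic `γ̂ₙ` converges to `γ`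
in probability. When `|γ̂ₙ - γ| ≤ δ`, the rules `q ≥ γ̂ₙ` and `q > γ` can only disagree on the band
`{|q - γ| ≤ δ}`, so `FP + FN` differs from the empirical frequency of `Q ∆ Qα` by at most the
empirical frequency of the band. Both frequencies converge by the law of large numbers, and the
band has small `μ`-measure for small `δ` because `μ {q = γ} = 0`.
-/

section OrderStatistics

variable {Ω : Type*} {Y : ℕ → Ω → ℝ} {n k : ℕ} {ω : Ω} {t : ℝ}

lemma orderStat_le_of_le_card (hk : 0 < k)
    (h : k ≤ ((Finset.range n).filter (fun j => Y j ω ≤ t)).card) : orderStat Y n k ω ≤ t := by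
  refine csInf_le ⟨-∑ j ∈ Finset.range n, |Y j ω|, fun s hs => ?_⟩ h
  obtain ⟨j, hj⟩ := Finset.card_pos.mp (hk.trans_le hs)
  rw [Finset.mem_filter] at hj
  have := Finset.single_le_sum (fun i _ => abs_nonneg (Y i ω)) hj.1
  linarith [neg_abs_le (Y j ω), hj.2]

lemma le_card_of_orderStat_lt (hkn : k ≤ n) (h : orderStat Y n k ω < t) :
    k ≤ ((Finset.range n).filter (fun j => Y j ω ≤ t)).card := by
  have hne : {s : ℝ | k ≤ ((Finset.range n).filter (fun j => Y j ω ≤ s)).card}.Nonempty := by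
    refine ⟨∑ j ∈ Finset.range n, |Y j ω|, ?_⟩
    rwa [mem_ofPred_eq, Finset.filter_true_of_mem fun j hj => (le_abs_self _).trans
      (Finset.single_le_sum (fun i _ => abs_nonneg (Y i ω)) hj), Finset.card_range]
  obtain ⟨s, hs, hst⟩ := exists_lt_of_csInf_lt hne h
  exact hs.trans (Finset.card_le_card
    (Finset.monotone_filter_right _ fun j _ hj => hj.trans hst.le))

end OrderStatistics

section EmpiricalMeans

variable {Ω β : Type*}

noncomputable def empiricalMean (W : ℕ → Ω → β) (f : β → ℝ) (n : ℕ) (ω : Ω) : ℝ :=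
  (n : ℝ)⁻¹ * ∑ j ∈ Finset.range n, f (W j ω)

lemma empiricalMean_indicator_Iic (Y : ℕ → Ω → ℝ) (t : ℝ) (n : ℕ) (ω : Ω) :
    empiricalMean Y ((Iic t).indicator 1) n ω
      = (n : ℝ)⁻¹ * ((Finset.range n).filter (fun j => Y j ω ≤ t)).card := by
  simp only [empiricalMean, indicator_apply, mem_Iic, Pi.one_apply, Finset.sum_boole]

lemma abs_empiricalMean_sub_le {W : ℕ → Ω → β} {f g h : β → ℝ} (hfg : ∀ x, |f x - g x| ≤ h x)
    (n : ℕ) (ω : Ω) :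
    |empiricalMean W f n ω - empiricalMean W g n ω| ≤ empiricalMean W h n ω := by
  rw [empiricalMean, empiricalMean, empiricalMean, ← mul_sub, ← Finset.sum_sub_distrib, abs_mul,
    abs_inv, Nat.abs_cast]
  gcongr
  exact (Finset.abs_sum_le_sum_abs _ _).trans (Finset.sum_le_sum fun j _ => hfg _)

end EmpiricalMeans

lemma orderStat_mem_Icc {Ω : Type*} {Y : ℕ → Ω → ℝ} {n : ℕ} {ω : Ω} {p a b : ℝ}
    (hp : p ≤ 1) (hk : 0 < ⌊p * n⌋₊)
    (ha : empiricalMean Y ((Iic a).indicator 1) n ω + (n : ℝ)⁻¹ ≤ p)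
    (hb : p ≤ empiricalMean Y ((Iic b).indicator 1) n ω) :
    orderStat Y n ⌊p * n⌋₊ ω ∈ Icc a b := by
  have hpn : 1 ≤ p * n := Nat.floor_pos.mp hk
  have hn : (0 : ℝ) < n := Nat.cast_pos.mpr (Nat.pos_of_ne_zero (by rintro rfl; simp at hk))
  have hk_le : (⌊p * n⌋₊ : ℝ) ≤ p * n := Nat.floor_le (by linarith)
  have hk_gt : p * n - 1 < ⌊p * n⌋₊ := Nat.sub_one_lt_floor _
  rw [empiricalMean_indicator_Iic] at ha hb
  set A := ((Finset.range n).filter (fun j => Y j ω ≤ a)).card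
  set B := ((Finset.range n).filter (fun j => Y j ω ≤ b)).card
  rw [← mul_add_one, inv_mul_le_iff₀ hn] at ha
  rw [le_inv_mul_iff₀ hn] at hb
  constructor
  · by_contra! hlt
    have hA := le_card_of_orderStat_lt (Nat.floor_le_of_le (by nlinarith)) hlt
    have : p * n - 1 < A := hk_gt.trans_le (by exact_mod_cast hA)
    linarith
  · by_contra! hlt
    have hB : B < ⌊p * n⌋₊ := by
      by_contra! hle
      exact (orderStat_le_of_le_card hk hle).not_gt hlt
    have : (B : ℝ) < p * n := (Nat.cast_lt.mpr hB).trans_le hk_le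
    linarith

lemma tendsto_measure_of_eventually_subset_union {α ι : Type*} [MeasurableSpace α]
    {μ : Measure α} {l : Filter ι} {s t u : ι → Set α} (hsub : ∀ᶠ i in l, s i ⊆ t i ∪ u i)
    (ht : Tendsto (fun i => μ (t i)) l (𝓝 0)) (hu : Tendsto (fun i => μ (u i)) l (𝓝 0)) :
    Tendsto (fun i => μ (s i)) l (𝓝 0) := by
  have htu := ht.add hu
  rw [add_zero] at htu
  refine tendsto_of_tendsto_of_tendsto_of_le_of_le' tendsto_const_nhds htu
    (Eventually.of_forall fun _ => zero_le) ?_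
  filter_upwards [hsub] with i hi using (measure_mono hi).trans (measure_union_le _ _)

section WeakLaw

open ProbabilityTheory

variable {Ω β : Type*} [MeasurableSpace Ω] [MeasurableSpace β] {P : Measure Ω}
  [IsProbabilityMeasure P] {W : ℕ → Ω → β} {ν : Measure β}

theorem tendstoInMeasure_empiricalMean (hW : ∀ j, Measurable (W j))
    (hindep : Pairwise fun i j => IndepFun (W i) (W j) P) (hlaw : ∀ j, P.map (W j) = ν)
    {f : β → ℝ} (hf : Measurable f) (hfint : Integrable f ν) :
    TendstoInMeasure P (empiricalMean W f) atTop (fun _ => ∫ x, f x ∂ν) := by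
  have hident : ∀ i, IdentDistrib (f ∘ W i) (f ∘ W 0) P P := fun i =>
    (IdentDistrib.mk (hW i).aemeasurable (hW 0).aemeasurable (by rw [hlaw, hlaw])).comp hf
  have hint : Integrable (f ∘ W 0) P := (hlaw 0 ▸ hfint).comp_measurable (hW 0)
  have hmean : ∫ ω, (f ∘ W 0) ω ∂P = ∫ x, f x ∂ν := by
    rw [← hlaw 0, integral_map (hW 0).aemeasurable hf.aestronglyMeasurable, Function.comp_def]
  refine tendstoInMeasure_of_tendsto_ae (fun n => ?_) ?_
  · exact ((Finset.measurable_sum _ fun j _ => hf.comp (hW j)).const_mul _).aestronglyMeasurable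
  · filter_upwards [strong_law_ae _ hint (fun i j hij => (hindep hij).comp hf hf) hident]
      with ω hω
    rw [hmean] at hω
    simpa only [empiricalMean, smul_eq_mul, Function.comp_apply] using hω

theorem tendstoInMeasure_empiricalMean_indicator (hW : ∀ j, Measurable (W j))
    (hindep : Pairwise fun i j => IndepFun (W i) (W j) P) (hlaw : ∀ j, P.map (W j) = ν)
    {S : Set β} (hS : MeasurableSet S) :
    TendstoInMeasure P (empiricalMean W (S.indicator 1)) atTop (fun _ => ν.real S) := by
  have : IsProbabilityMeasure ν := hlaw 0 ▸ Measure.isProbabilityMeasure_map (hW 0).aemeasurable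
  simpa only [integral_indicator_one hS] using tendstoInMeasure_empiricalMean hW hindep hlaw
    (measurable_one.indicator hS) ((integrable_const 1).indicator hS)

end WeakLaw

lemma StrictMonoOn.exists_gap {G : ℝ → ℝ} {U : Set ℝ} {γ ε : ℝ} (hmono : StrictMonoOn G U)
    (hU : U ∈ 𝓝 γ) (hε : 0 < ε) :
    ∃ δ ∈ Ioo 0 ε, ∃ c > 0, G (γ - δ) + 2 * c ≤ G γ ∧ G γ + 2 * c ≤ G (γ + δ) := by
  obtain ⟨r, hr, hball⟩ := Metric.mem_nhds_iff.mp hU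
  set δ := min r ε / 2 with hδ_def
  have hδ : 0 < δ := by positivity
  have hmem : ∀ s, |s - γ| ≤ δ → s ∈ U := fun s hs => hball <| by
    rw [Metric.mem_ball, Real.dist_eq]
    linarith [min_le_left r ε, hδ_def]
  have hlo := hmono (hmem (γ - δ) (by simp [abs_of_pos hδ])) (hmem γ (by simpa using hδ.le))
    (by linarith)
  have hhi := hmono (hmem γ (by simpa using hδ.le)) (hmem (γ + δ) (by simp [abs_of_pos hδ]))
    (by linarith)
  refine ⟨δ, ⟨hδ, by linarith [min_le_right r ε, hδ_def]⟩,
    min (G γ - G (γ - δ)) (G (γ + δ) - G γ) / 2,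
    by have := sub_pos.mpr hlo; have := sub_pos.mpr hhi; positivity, ?_, ?_⟩
  · linarith [min_le_left (G γ - G (γ - δ)) (G (γ + δ) - G γ)]
  · linarith [min_le_right (G γ - G (γ - δ)) (G (γ + δ) - G γ)]

section Consistency

open ProbabilityTheory

variable {Ω : Type*} [MeasurableSpace Ω] {P : Measure Ω} [IsProbabilityMeasure P]

theorem tendstoInMeasure_orderStat {Y : ℕ → Ω → ℝ} (hY : ∀ j, Measurable (Y j))
    (hindep : Pairwise fun i j => IndepFun (Y i) (Y j) P) {ν : Measure ℝ}
    (hlaw : ∀ j, P.map (Y j) = ν) {p γ : ℝ} (hγ : ν.real (Iic γ) = p) {U : Set ℝ}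
    (hU : U ∈ 𝓝 γ) (hmono : StrictMonoOn (fun t => ν.real (Iic t)) U) :
    TendstoInMeasure P (fun n => orderStat Y n ⌊p * n⌋₊) atTop (fun _ => γ) := by
  have : IsProbabilityMeasure ν := hlaw 0 ▸ Measure.isProbabilityMeasure_map (hY 0).aemeasurable
  rw [tendstoInMeasure_iff_dist]
  intro ε hε
  obtain ⟨δ, ⟨hδ, hδε⟩, c, hc, hlo, hhi⟩ := hmono.exists_gap hU hε
  rw [hγ] at hlo hhi
  have hcp : 2 * c ≤ p := by linarith [measureReal_nonneg (μ := ν) (s := Iic (γ - δ))]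
  have hfreq := fun t => tendstoInMeasure_iff_dist.mp
    (tendstoInMeasure_empiricalMean_indicator hY hindep hlaw (measurableSet_Iic (a := t))) c hc
  refine tendsto_measure_of_eventually_subset_union ?_ (hfreq (γ - δ)) (hfreq (γ + δ))
  filter_upwards [eventually_ge_atTop ⌈c⁻¹⌉₊] with n hn ω hω
  by_contra! hgood
  simp only [mem_union, mem_ofPred_eq, not_or, not_le, Real.dist_eq, abs_lt] at hgood hω
  have hcn : c⁻¹ ≤ n := (Nat.le_ceil _).trans (by exact_mod_cast hn)
  have hinv : (n : ℝ)⁻¹ ≤ c := inv_le_of_inv_le₀ hc hcn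
  have hk : 0 < ⌊p * n⌋₊ := by
    refine Nat.floor_pos.mpr ?_
    calc 1 ≤ c * n := by rwa [← inv_le_iff_one_le_mul₀' hc]
      _ ≤ p * n := by gcongr; linarith
  obtain ⟨h1, h2⟩ := orderStat_mem_Icc (Y := Y) (ω := ω) (a := γ - δ) (b := γ + δ)
    (hγ ▸ measureReal_le_one) hk (by linarith) (by linarith)
  rcases le_abs'.mp hω with h | h <;> linarith

end Consistency

section PlugIn

open ProbabilityTheory

variable {β : Type*}

noncomputable def misclassified (q : β → ℝ) (Q : Set β) (t : ℝ) (z : β) : ℝ :=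
  (if q z < t ∧ z ∈ Q then 1 else 0) + (if t ≤ q z ∧ z ∉ Q then 1 else 0)

lemma abs_misclassified_sub_indicator_le {q : β → ℝ} {Q : Set β} {t γ δ : ℝ} (ht : |t - γ| ≤ δ)
    (z : β) :
    |misclassified q Q t z - (Q ∆ {x | γ < q x}).indicator 1 z|
      ≤ (q ⁻¹' Metric.closedBall γ δ).indicator 1 z := by
  by_cases hz : z ∈ q ⁻¹' Metric.closedBall γ δ
  · rw [indicator_of_mem hz, misclassified, indicator_apply]
    split_ifs with hFP hFN <;> norm_num
    exact absurd hFN.1 (not_le.mpr hFP.1)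
  · have hfar : δ < q z - γ ∨ δ < γ - q z := by
      rwa [mem_preimage, Metric.mem_closedBall, Real.dist_eq, not_le, lt_abs, neg_sub] at hz
    rw [indicator_of_notMem hz]
    rw [abs_le] at ht
    rcases hfar with hfar | hfar
    · have hzt : t ≤ q z := by linarith
      have hzγ : γ < q z := by linarith
      by_cases hQ : z ∈ Q <;> simp [misclassified, mem_symmDiff, hzt, hzγ, hQ, not_lt.mpr hzt]
    · have hzt : q z < t := by linarith
      have hzγ : q z ≤ γ := by linarith
      by_cases hQ : z ∈ Q <;>
        simp [misclassified, mem_symmDiff, hzt, hQ, not_le.mpr hzt, not_lt.mpr hzγ]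

variable [MeasurableSpace β]

lemma exists_measureReal_preimage_closedBall_lt {μ : Measure β} [IsFiniteMeasure μ] {q : β → ℝ}
    (hq : Measurable q) {γ : ℝ} (hγ : μ (q ⁻¹' {γ}) = 0) {ε : ℝ} (hε : 0 < ε) :
    ∃ δ > 0, μ.real (q ⁻¹' Metric.closedBall γ δ) < ε := by
  have hlim := tendsto_measure_cthickening_of_isClosed (μ := μ.map q)
    ⟨1, one_pos, measure_ne_top _ _⟩ (isClosed_singleton (x := γ))
  rw [Measure.map_apply hq (measurableSet_singleton γ), hγ] at hlim
  obtain ⟨δ, hlt, hδ⟩ := ((hlim.mono_left nhdsWithin_le_nhds).eventually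
    (gt_mem_nhds (ENNReal.ofReal_pos.mpr hε))).and (self_mem_nhdsWithin (s := Ioi 0)) |>.exists
  rw [Metric.cthickening_singleton _ hδ.le,
    Measure.map_apply hq Metric.isClosed_closedBall.measurableSet] at hlt
  exact ⟨δ, hδ, ENNReal.toReal_lt_of_lt_ofReal hlt⟩

theorem tendstoInMeasure_empiricalMean_misclassified {Ω : Type*} [MeasurableSpace Ω]
    {P : Measure Ω} [IsProbabilityMeasure P] {Z : ℕ → Ω → β} (hZ : ∀ j, Measurable (Z j))
    (hindep : Pairwise fun i j => IndepFun (Z i) (Z j) P) {μ : Measure β}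
    (hlaw : ∀ j, P.map (Z j) = μ) {q : β → ℝ} (hq : Measurable q) {Q : Set β}
    (hQ : MeasurableSet Q) {γ : ℝ} (hγ : μ (q ⁻¹' {γ}) = 0) {t : ℕ → Ω → ℝ}
    (ht : TendstoInMeasure P t atTop (fun _ => γ)) :
    TendstoInMeasure P
      (fun mn : ℕ × ℕ => fun ω => empiricalMean Z (misclassified q Q (t mn.2 ω)) mn.1 ω) atTop
      (fun _ => μ.real (Q ∆ {x | γ < q x})) := by
  have : IsProbabilityMeasure μ := hlaw 0 ▸ Measure.isProbabilityMeasure_map (hZ 0).aemeasurable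
  rw [tendstoInMeasure_iff_dist]
  intro ε hε
  obtain ⟨δ, hδ, hband⟩ :=
    exists_measureReal_preimage_closedBall_lt hq hγ (by positivity : 0 < ε / 3)
  set T := Q ∆ {x | γ < q x}
  set B := q ⁻¹' Metric.closedBall γ δ
  have hfst : Tendsto Prod.fst (atTop : Filter (ℕ × ℕ)) atTop :=
    prod_atTop_atTop_eq (α := ℕ) (β := ℕ) ▸ tendsto_fst
  have hsnd : Tendsto Prod.snd (atTop : Filter (ℕ × ℕ)) atTop :=
    prod_atTop_atTop_eq (α := ℕ) (β := ℕ) ▸ tendsto_snd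
  have hfreq : ∀ S, MeasurableSet S → Tendsto (fun mn : ℕ × ℕ =>
      P {ω | ε / 3 ≤ dist (empiricalMean Z (S.indicator 1) mn.1 ω) (μ.real S)}) atTop (𝓝 0) :=
    fun S hS => tendstoInMeasure_iff_dist.mp ((tendstoInMeasure_empiricalMean_indicator hZ hindep
      hlaw hS).comp hfst) _ (by positivity)
  refine tendsto_measure_of_eventually_subset_union (Eventually.of_forall fun mn => ?_)
    (tendstoInMeasure_iff_dist.mp (ht.comp hsnd) δ hδ)
    (tendsto_measure_of_eventually_subset_union (Eventually.of_forall fun _ => subset_rfl)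
      (hfreq T (hQ.symmDiff (measurableSet_lt measurable_const hq)))
      (hfreq B (hq Metric.isClosed_closedBall.measurableSet)))
  intro ω hω
  by_contra! hgood
  simp only [mem_union, mem_ofPred_eq, not_or, not_le, Real.dist_eq, Function.comp_apply]
    at hgood hω
  have hclose := abs_empiricalMean_sub_le (W := Z)
    (abs_misclassified_sub_indicator_le (q := q) (Q := Q) hgood.1.le) mn.1 ω
  obtain ⟨-, hT, hB⟩ := hgood
  rw [abs_lt] at hT hB
  rw [abs_le] at hclose
  rcases le_abs'.mp hω with h | h <;> linarith

end PlugIn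

theorem loss_estimator_consistent_general {d : ℕ}
    (q : (Fin d → ℝ) → ℝ) (hqmeas : Measurable q)
    (F : Measure (Fin d → ℝ)) [IsProbabilityMeasure F]
    (α : ℝ) (hα0 : 0 < α)
    (γ : ℝ)
    (hQα : F {x | γ < q x} = ENNReal.ofReal α)
    {Ω : Type*} [MeasurableSpace Ω] (P : Measure Ω) [IsProbabilityMeasure P]
    (X Z : ℕ → Ω → (Fin d → ℝ))
    (hXmeas : ∀ j, Measurable (X j)) (hZmeas : ∀ j, Measurable (Z j))
    (hindep : ProbabilityTheory.iIndepFun (Sum.elim X Z) P)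
    (hXlaw : ∀ j, P.map (X j) = F)
    (G : ℝ → ℝ) (hG : G = fun t => (F.map q (Set.Iic t)).toReal)
    (U : Set ℝ) (hU : U ∈ 𝓝 γ) (hGmono : StrictMonoOn G U)
    (μ : Measure (Fin d → ℝ))
    (hμγ : μ {x | q x = γ} = 0)
    (hZlaw : ∀ j, P.map (Z j) = μ)
    (Q : Set (Fin d → ℝ)) (hQ : MeasurableSet Q)
    (γhat : ℕ → Ω → ℝ)
    (hγhat : γhat = fun n ω => orderStat (fun j ω' => q (X j ω')) n ⌊(1 - α) * n⌋₊ ω)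
    (FP FN : ℕ → ℕ → Ω → ℝ)
    (hFP : FP = fun (m n : ℕ) (ω : Ω) => (m : ℝ)⁻¹ *
      ∑ j ∈ Finset.range m, if q (Z j ω) < γhat n ω ∧ Z j ω ∈ Q then (1 : ℝ) else 0)
    (hFN : FN = fun (m n : ℕ) (ω : Ω) => (m : ℝ)⁻¹ *
      ∑ j ∈ Finset.range m, if γhat n ω ≤ q (Z j ω) ∧ Z j ω ∉ Q then (1 : ℝ) else 0) :
    μ (Q \ {x | γ < q x}) + μ ({x | γ < q x} \ Q) = μ (Q ∆ {x | γ < q x}) ∧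
      TendstoInMeasure P (fun p : ℕ × ℕ => fun ω => FP p.1 p.2 ω + FN p.1 p.2 ω)
        atTop (fun _ => (μ (Q ∆ {x | γ < q x})).toReal) := by
  have hQα_meas : MeasurableSet {x | γ < q x} := measurableSet_lt measurable_const hqmeas
  refine ⟨(measure_symmDiff_eq hQ.nullMeasurableSet hQα_meas.nullMeasurableSet).symm, ?_⟩
  have hXindep : Pairwise fun i j =>
      ProbabilityTheory.IndepFun (fun ω => q (X i ω)) (fun ω => q (X j ω)) P :=
    fun i j hij => (hindep.indepFun (Sum.inl_injective.ne hij)).comp hqmeas hqmeas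
  have hZindep : Pairwise fun i j => ProbabilityTheory.IndepFun (Z i) (Z j) P :=
    fun i j hij => hindep.indepFun (Sum.inr_injective.ne hij)
  have hqXlaw : ∀ j, P.map (fun ω => q (X j ω)) = F.map q := fun j => by
    rw [← hXlaw j, Measure.map_map hqmeas (hXmeas j)]
    rfl
  have hGγ : (F.map q).real (Iic γ) = 1 - α := by
    rw [map_measureReal_apply hqmeas measurableSet_Iic,
      show q ⁻¹' Iic γ = {x | γ < q x}ᶜ by ext; simp, probReal_compl_eq_one_sub hQα_meas,
      measureReal_def, hQα, ENNReal.toReal_ofReal hα0.le]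
  have hγhat_lim : TendstoInMeasure P γhat atTop (fun _ => γ) := by
    subst hγhat hG
    exact tendstoInMeasure_orderStat (fun j => hqmeas.comp (hXmeas j)) hXindep hqXlaw hGγ hU hGmono
  have hloss_eq : (fun p : ℕ × ℕ => fun ω => FP p.1 p.2 ω + FN p.1 p.2 ω)
      = fun mn ω => empiricalMean Z (misclassified q Q (γhat mn.2 ω)) mn.1 ω := by
    subst hFP hFN
    ext mn ω
    simp only [empiricalMean, misclassified, Finset.sum_add_distrib, mul_add]
  rw [hloss_eq]
  exact tendstoInMeasure_empiricalMean_misclassified hZmeas hZindep hZlaw hqmeas hQ hμγ hγhat_lim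

/-- Let `q ≥ 0` have `0 < ∫ q = cq < ∞` and let `F` be the probability
measure with Lebesgue density `q / cq`.  Let `0 < α < 1`, `γ > 0`, `F {q > γ} = α` and
`Qα = {q > γ}`.  Let `X 0, X 1, …` be i.i.d. with law `F` such that the CDF `G` of `q (X 0)`
is continuous and strictly increasing near `γ`, and let `γ̂ n` be the `⌊(1-α) n⌋`-th order
statistic of `q (X 0), …, q (X (n-1))`.  Let `μ` be a probability measure with a Lebesgue
density, with `μ {q = γ} = 0`, and let `Z 0, Z 1, …` be i.i.d. with law `μ`, independent of
the `X`'s.  For a fixed Borel set `Q`, define the empirical false-positive and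
false-negative rates `FP m n` and `FN m n` on the first `m` test samples with threshold
`γ̂ n`.  Then `FP m n + FN m n → μ (Q \ Qα) + μ (Qα \ Q) = μ (Q ∆ Qα)` in probability as
`min (m, n) → ∞`. -/
theorem loss_estimator_consistent {d : ℕ}
    (q : (Fin d → ℝ) → ℝ) (hqmeas : Measurable q) (hq0 : ∀ x, 0 ≤ q x)
    (cq : ℝ) (hcq_pos : 0 < cq)
    (hcq : ∫⁻ x, ENNReal.ofReal (q x) = ENNReal.ofReal cq)
    (F : Measure (Fin d → ℝ)) [IsProbabilityMeasure F]
    (hF : F = volume.withDensity (fun x => ENNReal.ofReal (q x / cq)))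
    (α : ℝ) (hα0 : 0 < α) (hα1 : α < 1)
    (γ : ℝ) (hγ : 0 < γ)
    (hQα : F {x | γ < q x} = ENNReal.ofReal α)
    {Ω : Type*} [MeasurableSpace Ω] (P : Measure Ω) [IsProbabilityMeasure P]
    (X Z : ℕ → Ω → (Fin d → ℝ))
    (hXmeas : ∀ j, Measurable (X j)) (hZmeas : ∀ j, Measurable (Z j))
    (hindep : ProbabilityTheory.iIndepFun (Sum.elim X Z) P)
    (hXlaw : ∀ j, P.map (X j) = F)
    (G : ℝ → ℝ) (hG : G = fun t => (F.map q (Set.Iic t)).toReal)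
    (U : Set ℝ) (hU : U ∈ 𝓝 γ) (hGcont : ContinuousOn G U) (hGmono : StrictMonoOn G U)
    (μ : Measure (Fin d → ℝ)) [IsProbabilityMeasure μ]
    (g : (Fin d → ℝ) → ℝ≥0∞) (hμden : μ = volume.withDensity g)
    (hμγ : μ {x | q x = γ} = 0)
    (hZlaw : ∀ j, P.map (Z j) = μ)
    (Q : Set (Fin d → ℝ)) (hQ : MeasurableSet Q)
    (γhat : ℕ → Ω → ℝ)
    (hγhat : γhat = fun n ω => orderStat (fun j ω' => q (X j ω')) n ⌊(1 - α) * n⌋₊ ω)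
    (FP FN : ℕ → ℕ → Ω → ℝ)
    (hFP : FP = fun (m n : ℕ) (ω : Ω) => (m : ℝ)⁻¹ *
      ∑ j ∈ Finset.range m, if q (Z j ω) < γhat n ω ∧ Z j ω ∈ Q then (1 : ℝ) else 0)
    (hFN : FN = fun (m n : ℕ) (ω : Ω) => (m : ℝ)⁻¹ *
      ∑ j ∈ Finset.range m, if γhat n ω ≤ q (Z j ω) ∧ Z j ω ∉ Q then (1 : ℝ) else 0) :
    μ (Q \ {x | γ < q x}) + μ ({x | γ < q x} \ Q) = μ (Q ∆ {x | γ < q x}) ∧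
      TendstoInMeasure P (fun p : ℕ × ℕ => fun ω => FP p.1 p.2 ω + FN p.1 p.2 ω)
        atTop (fun _ => (μ (Q ∆ {x | γ < q x})).toReal) :=
  loss_estimator_consistent_general q hqmeas F α hα0 γ hQα P X Z hXmeas hZmeas hindep hXlaw G hG U
    hU hGmono μ hμγ hZlaw Q hQ γhat hγhat FP FN hFP hFN
end

section
/- Let f : ℝ^d → [0, ∞) be continuous and let Q* ⊆ ℝ^d. Suppose that for every pair of closed axis-parallel boxes H ⊆ Q* and H′ ⊆ ℝ^d \ Q* (products of closed intervals of positive length) of equal Lebesgue volume, one has ∫_H f(x) dx ≥ ∫_{H′} f(x) dx. Then f(x) ≥ f(x′) for every x in the topological interior of Q* and every x′ in the topological interior of ℝ^d \ Q*. -/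
open MeasureTheory Set
open scoped ENNReal

/-!
If `f x < f x'`, pick thresholds `f x < a < b < f x'`. By continuity there is a radius `r`
such that `f < a` on the sup-norm ball (a cube) of radius `r` around `x`, `f > b` on the cube
around `x'`, and the two cubes lie in `Qs` and `Qsᶜ`. The cubes have equal volume `V > 0`,
so their masses are at most `a V` and at least `b V`, contradicting the hypothesis.
-/

open Metric Filter Topology

lemma Real.pi_closedBall_eq_Icc {ι : Type*} [Fintype ι] (c : ι → ℝ) {r : ℝ}
    (hr : 0 ≤ r) :
    closedBall c r = Icc (c - fun _ ↦ r) (c + fun _ ↦ r) := by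
  rw [closedBall_pi c hr, ← pi_univ_Icc]
  simp only [Real.closedBall_eq_Icc, Pi.sub_apply, Pi.add_apply]

lemma Metric.exists_pos_closedBall_subset_of_mem_nhds₂ {α : Type*} [PseudoMetricSpace α]
    {x y : α} {s t : Set α} (hs : s ∈ 𝓝 x) (ht : t ∈ 𝓝 y) :
    ∃ r > 0, closedBall x r ⊆ s ∧ closedBall y r ⊆ t := by
  have hsmall : ∀ᶠ r in 𝓝[>] (0 : ℝ), closedBall x r ⊆ s ∧ closedBall y r ⊆ t :=
    ((eventually_closedBall_subset hs).and (eventually_closedBall_subset ht)).filter_mono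
      nhdsWithin_le_nhds
  have hpos : ∀ᶠ r in 𝓝[>] (0 : ℝ), 0 < r := eventually_mem_nhdsWithin
  obtain ⟨r, hr, hsub⟩ := (hpos.and hsmall).exists
  exact ⟨r, hr, hsub⟩

lemma setIntegral_le_of_le_const_real {X : Type*} [MeasurableSpace X] {μ : Measure X}
    {s : Set X} {f : X → ℝ} {c : ℝ} (hs : MeasurableSet s) (hμs : μ s ≠ ∞)
    (hf : ∀ x ∈ s, f x ≤ c) (hfint : IntegrableOn f s μ) :
    ∫ x in s, f x ∂μ ≤ c * μ.real s := by
  calc ∫ x in s, f x ∂μ ≤ ∫ _ in s, c ∂μ :=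
        setIntegral_mono_on hfint (integrableOn_const hμs) hs hf
    _ = c * μ.real s := by rw [setIntegral_const, smul_eq_mul, mul_comm]

theorem box_mass_domination_implies_pointwise_general {d : ℕ}
    (f : (Fin d → ℝ) → ℝ) (hf : Continuous f)
    (Qs : Set (Fin d → ℝ))
    (hbox : ∀ a b a' b' : Fin d → ℝ, (∀ i, a i < b i) → (∀ i, a' i < b' i) →
      Set.Icc a b ⊆ Qs → Set.Icc a' b' ⊆ Qsᶜ →
      volume (Set.Icc a b) = volume (Set.Icc a' b') →
      (∫ x in Set.Icc a' b', f x) ≤ ∫ x in Set.Icc a b, f x) :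
    ∀ x ∈ interior Qs, ∀ x' ∈ interior Qsᶜ, f x' ≤ f x := by
  intro x hx x' hx'
  by_contra! hlt
  obtain ⟨a, hxa, ha⟩ := exists_between hlt
  obtain ⟨b, hab, hbx'⟩ := exists_between ha
  obtain ⟨r, hr, hB, hB'⟩ := exists_pos_closedBall_subset_of_mem_nhds₂
    (inter_mem (isOpen_interior.mem_nhds hx) (hf.continuousAt.eventually (gt_mem_nhds hxa)))
    (inter_mem (isOpen_interior.mem_nhds hx') (hf.continuousAt.eventually (lt_mem_nhds hbx')))
  have hvol : volume (closedBall x r) = volume (closedBall x' r) := by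
    rw [Real.volume_pi_closedBall _ hr.le, Real.volume_pi_closedBall _ hr.le]
  have hV : 0 < volume.real (closedBall x r) :=
    ENNReal.toReal_pos (measure_closedBall_pos volume x hr).ne' measure_closedBall_lt_top.ne
  have upper : ∫ y in closedBall x r, f y ≤ a * volume.real (closedBall x r) :=
    setIntegral_le_of_le_const_real measurableSet_closedBall measure_closedBall_lt_top.ne
      (fun y hy ↦ (hB hy).2.le) (hf.continuousOn.integrableOn_compact (isCompact_closedBall _ _))
  have lower : b * volume.real (closedBall x r) ≤ ∫ y in closedBall x' r, f y := by
    rw [measureReal_def, hvol]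
    exact setIntegral_ge_of_const_le_real measurableSet_closedBall measure_closedBall_lt_top.ne
      (fun y hy ↦ (hB' hy).2.le) (hf.continuousOn.integrableOn_compact (isCompact_closedBall _ _))
  have hmass : ∫ y in closedBall x' r, f y ≤ ∫ y in closedBall x r, f y := by
    simp only [Real.pi_closedBall_eq_Icc _ hr.le] at hB hB' hvol ⊢
    have hside (c : Fin d → ℝ) (i : Fin d) : c i - r < c i + r := by linarith
    exact hbox _ _ _ _ (hside x) (hside x') (hB.trans (inter_subset_left.trans interior_subset))
      (hB'.trans (inter_subset_left.trans interior_subset)) hvol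
  exact (mul_lt_mul_of_pos_right hab hV).not_ge (lower.trans (hmass.trans upper))

/-- Let `f : ℝ^d → [0, ∞)` be continuous and `Qs ⊆ ℝ^d`.  Suppose that for
every pair of closed axis-parallel boxes `Icc a b ⊆ Qs` and `Icc a' b' ⊆ Qsᶜ` with all sides
of positive length and equal Lebesgue volume, `∫_{Icc a b} f ≥ ∫_{Icc a' b'} f`.  Then
`f x ≥ f x'` for every `x` in the interior of `Qs` and every `x'` in the interior of the
complement `Qsᶜ`. -/
theorem box_mass_domination_implies_pointwise {d : ℕ}
    (f : (Fin d → ℝ) → ℝ) (hf : Continuous f) (hf0 : ∀ x, 0 ≤ f x)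
    (Qs : Set (Fin d → ℝ))
    (hbox : ∀ a b a' b' : Fin d → ℝ, (∀ i, a i < b i) → (∀ i, a' i < b' i) →
      Set.Icc a b ⊆ Qs → Set.Icc a' b' ⊆ Qsᶜ →
      volume (Set.Icc a b) = volume (Set.Icc a' b') →
      (∫ x in Set.Icc a' b', f x) ≤ ∫ x in Set.Icc a b, f x) :
    ∀ x ∈ interior Qs, ∀ x' ∈ interior Qsᶜ, f x' ≤ f x :=
  box_mass_domination_implies_pointwise_general f hf Qs hbox
end
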